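/- Let n ≥ 2, k > 0, c > 0, ω_f > 0, let h₁ ∈ ℝⁿ be nonzero with ĥ₁ := h₁/‖h₁‖, let H be a symmetric positive definite real n×n matrix, and take α = 1, so M := k(Iₙ − ĥ₁ ĥ₁ᵀ) and c̃ := c/‖h₁‖². Let U be any real orthogonal n×n matrix with Uᵀ(ĥ₁ĥ₁ᵀ)U = diag(1,0,…,0), set H̃ := UᵀHU and let H̃₂₂ be the lower-right (n−1)×(n−1) block of H̃. Then the multiset of complex eigenvalues of Z := ω_f M H + ω_f c̃ h₁ h₁ᵀ equals {ω_f c} together with the eigenvalues of ω_f k H̃₂₂; moreover H̃₂₂ is symmetric positive definite. -/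

import Mathlib

noncomputable section
open Matrix Polynomial

/-- The multiset of complex eigenvalues (roots of the characteristic polynomial over `ℂ`,
with multiplicity) of a real matrix. -/
def eigMultiset {m : Type} [Fintype m] [DecidableEq m] (A : Matrix m m ℝ) : Multiset ℂ :=
  ((A.charpoly).map (algebraMap ℝ ℂ)).roots

/-- The normalized vector `ĥ₁ = h₁/‖h₁‖`. -/
def hhat (n : ℕ) (h₁ : Fin n → ℝ) : Fin n → ℝ := (Real.sqrt (h₁ ⬝ᵥ h₁))⁻¹ • h₁

/-! Since `c̃ h₁h₁ᵀ = c ĥ₁ĥ₁ᵀ`, we have `Z = ω_f k (I − ĥ₁ĥ₁ᵀ) H + ω_f c ĥ₁ĥ₁ᵀ`, and conjugating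
by `U` turns this into `ω_f k (I − D) H̃ + ω_f c D` with `D = diag(1,0,…,0)`. Its first row is
`(ω_f c, 0, …, 0)`, so expanding the characteristic polynomial along that row splits off the
factor `X − ω_f c`, leaving the characteristic polynomial of the lower-right block `ω_f k H̃₂₂`.
Positive definiteness passes from `H` to `H̃ = UᵀHU` and then to its principal submatrix `H̃₂₂`. -/

theorem vecMulVec_hhat (n : ℕ) (h : Fin n → ℝ) :
    vecMulVec (hhat n h) (hhat n h) = (h ⬝ᵥ h)⁻¹ • vecMulVec h h := by
  rw [hhat, smul_vecMulVec, vecMulVec_smul, smul_smul, ← mul_inv,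
    Real.mul_self_sqrt (by simpa using dotProduct_star_self_nonneg h)]

section CommRing

variable {R : Type*} [CommRing R]

theorem Matrix.charpoly_transpose_mul_mul {n : Type*} [Fintype n] [DecidableEq n]
    {U : Matrix n n R} (hU : U * Uᵀ = 1) (A : Matrix n n R) :
    (Uᵀ * A * U).charpoly = A.charpoly := by
  rw [Matrix.mul_assoc, charpoly_mul_comm, Matrix.mul_assoc, hU, Matrix.mul_one]

theorem Matrix.transpose_mul_mul_mul_mul {n : Type*} [Fintype n] [DecidableEq n]
    {U : Matrix n n R} (hU : U * Uᵀ = 1) (A B : Matrix n n R) :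
    Uᵀ * (A * B) * U = (Uᵀ * A * U) * (Uᵀ * B * U) := by
  simp only [Matrix.mul_assoc]
  rw [← Matrix.mul_assoc U, hU, Matrix.one_mul]

theorem Matrix.charpoly_eq_X_sub_C_mul_of_row_zero {m : ℕ} (a : R)
    (B : Matrix (Fin (m + 1)) (Fin (m + 1)) R) (h0 : ∀ j, B 0 j = if j = 0 then a else 0) :
    B.charpoly = (X - C a) * (B.submatrix Fin.succ Fin.succ).charpoly := by
  rw [Matrix.charpoly, det_succ_row_zero, Finset.sum_eq_single 0]
  · have hminor : (charmatrix B).submatrix Fin.succ Fin.succ =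
        charmatrix (B.submatrix Fin.succ Fin.succ) := by
      ext i j
      simp only [submatrix_apply, charmatrix_apply, diagonal_apply, Fin.succ_inj]
    simp [Fin.succAbove_zero, hminor, charmatrix_apply_eq, h0, Matrix.charpoly]
  · intro j _ hj
    simp [charmatrix_apply_ne _ _ _ (Ne.symm hj), h0, hj]
  · simp

abbrev firstDiag (m : ℕ) : Matrix (Fin (m + 1)) (Fin (m + 1)) R :=
  diagonal fun i => if i = 0 then 1 else 0

theorem Matrix.charpoly_smul_one_sub_firstDiag_mul_add {m : ℕ} (a b : R)
    (A : Matrix (Fin (m + 1)) (Fin (m + 1)) R) :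
    (a • ((1 - firstDiag m) * A) + b • firstDiag m).charpoly =
      (X - C b) * (a • A.submatrix Fin.succ Fin.succ).charpoly := by
  have hentry : (1 - firstDiag m) * A = of fun i j => if i = 0 then 0 else A i j := by
    ext i j
    by_cases hi : i = 0 <;> simp [Matrix.sub_mul, hi]
  rw [charpoly_eq_X_sub_C_mul_of_row_zero b]
  · congr 2
    ext i j
    simp [hentry, diagonal_apply, Fin.succ_ne_zero]
  · intro j
    by_cases hj : j = 0 <;> simp [hentry, hj, eq_comm]

end CommRing

theorem eigMultiset_eq_cons_of_charpoly_eq {m n : Type} [Fintype m] [DecidableEq m]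
    [Fintype n] [DecidableEq n] {A : Matrix m m ℝ} {B : Matrix n n ℝ} {a : ℝ}
    (h : A.charpoly = (X - C a) * B.charpoly) :
    eigMultiset A = (a : ℂ) ::ₘ eigMultiset B := by
  have hB : B.charpoly.map (algebraMap ℝ ℂ) ≠ 0 := ((charpoly_monic B).map _).ne_zero
  rw [eigMultiset, h, Polynomial.map_mul, Polynomial.map_sub, map_X, map_C,
    roots_mul (mul_ne_zero (X_sub_C_ne_zero _) hB), roots_X_sub_C, Multiset.singleton_add]
  rfl

theorem Matrix.PosDef.transpose_mul_mul_of_transpose_mul_eq_one {n : Type*} [Fintype n]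
    [DecidableEq n] {H U : Matrix n n ℝ} (hH : H.PosDef) (hU : Uᵀ * U = 1) : (Uᵀ * H * U).PosDef := by
  have hinj : Function.Injective U.mulVec := fun x y hxy => by
    simpa [mulVec_mulVec, hU] using congrArg (Uᵀ *ᵥ ·) hxy
  simpa using hH.conjTranspose_mul_mul_same hinj

theorem stmt6 (m : ℕ) (k c ωf : ℝ)
    (h₁ : Fin (m + 1) → ℝ)
    (H : Matrix (Fin (m + 1)) (Fin (m + 1)) ℝ) (hH : H.PosDef)
    (U : Matrix (Fin (m + 1)) (Fin (m + 1)) ℝ) (hU : Uᵀ * U = 1)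
    (hUdiag : Uᵀ * Matrix.vecMulVec (hhat (m + 1) h₁) (hhat (m + 1) h₁) * U =
      Matrix.diagonal fun i => if i = 0 then (1 : ℝ) else 0) :
    eigMultiset
        (ωf • ((k • ((1 : Matrix (Fin (m + 1)) (Fin (m + 1)) ℝ) -
            Matrix.vecMulVec (hhat (m + 1) h₁) (hhat (m + 1) h₁))) * H) +
          (ωf * (c / (h₁ ⬝ᵥ h₁))) • Matrix.vecMulVec h₁ h₁) =
      ((ωf * c : ℝ) : ℂ) ::ₘ
        eigMultiset ((ωf * k) • Matrix.of fun i j : Fin m => (Uᵀ * H * U) i.succ j.succ) ∧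
    (Matrix.of fun i j : Fin m => (Uᵀ * H * U) i.succ j.succ).PosDef := by
  have hU' : U * Uᵀ = 1 := mul_eq_one_comm.mp hU
  set P := vecMulVec (hhat (m + 1) h₁) (hhat (m + 1) h₁) with hP
  have hZ : ωf • ((k • (1 - P)) * H) + (ωf * (c / (h₁ ⬝ᵥ h₁))) • vecMulVec h₁ h₁ =
      (ωf * k) • ((1 - P) * H) + (ωf * c) • P := by
    rw [hP, vecMulVec_hhat, smul_smul, Matrix.smul_mul, smul_smul, div_eq_mul_inv,
      mul_assoc]
  have hconj : Uᵀ * ((ωf * k) • ((1 - P) * H) + (ωf * c) • P) * U =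
      (ωf * k) • ((1 - firstDiag m) * (Uᵀ * H * U)) + (ωf * c) • firstDiag m := by
    rw [Matrix.mul_add, Matrix.add_mul, Matrix.mul_smul, Matrix.smul_mul, Matrix.mul_smul,
      Matrix.smul_mul, transpose_mul_mul_mul_mul hU', Matrix.mul_sub, Matrix.sub_mul,
      Matrix.mul_one, hU, hUdiag]
  refine ⟨eigMultiset_eq_cons_of_charpoly_eq ?_,
    (hH.transpose_mul_mul_of_transpose_mul_eq_one hU).submatrix (Fin.succ_injective m)⟩
  rw [hZ, ← charpoly_transpose_mul_mul hU', hconj, charpoly_smul_one_sub_firstDiag_mul_add]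
  rfl
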